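/- arXiv:1307.0040 — 3 statements merged into one kernel-verified Lean document; each statement's English description precedes it below -/
import Mathlib

section
/- Suppose S_0, S_1, S_2, ... are pairwise disjoint subsets of ℕ and I ⊆ ℕ has upper density strictly greater than q₀. Then for all sufficiently large j, the upper density of I \ S_j is strictly greater than q₀. -/
open Filter

noncomputable def pdens (S : Set ℕ) (n : ℕ) : ℝ := (S ∩ Set.Iio n).ncard / n

noncomputable def lowerDensity (S : Set ℕ) : ℝ := liminf (pdens S) atTop

noncomputable def upperDensity (S : Set ℕ) : ℝ := limsup (pdens S) atTop

/-!
If `j₁, …, j_k` all satisfy `upperDensity (I \ S j) ≤ q₀`, choose `n` with `pdens I n` close to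
`upperDensity I` and every `pdens (I \ S j) n` below `q₀ + c`. Then each `pdens (S j) n` exceeds a
fixed `c > 0`, while disjointness forces these `k` densities to sum to at most `1`; so `k ≤ 1 / c`.
-/

open Finset Function

lemma pdens_eq_card_filter (S : Set ℕ) [DecidablePred (· ∈ S)] (n : ℕ) :
    pdens S n = #{x ∈ range n | x ∈ S} / n := by
  rw [pdens, ← Set.ncard_coe_finset]
  congr 3
  ext x
  simp [and_comm]

lemma pdens_nonneg (S : Set ℕ) (n : ℕ) : 0 ≤ pdens S n := by
  unfold pdens
  positivity

lemma pdens_le_one (S : Set ℕ) (n : ℕ) : pdens S n ≤ 1 := by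
  classical
  rw [pdens_eq_card_filter]
  apply div_le_one_of_le₀ _ n.cast_nonneg
  exact_mod_cast (card_filter_le _ _).trans_eq (card_range n)

lemma pdens_le_pdens_sdiff_add (I T : Set ℕ) (n : ℕ) :
    pdens I n ≤ pdens (I \ T) n + pdens T n := by
  classical
  simp only [pdens_eq_card_filter, ← add_div]
  refine div_le_div_of_nonneg_right ?_ n.cast_nonneg
  calc (#{x ∈ range n | x ∈ I} : ℝ)
      ≤ #({x ∈ range n | x ∈ I \ T} ∪ {x ∈ range n | x ∈ T}) := by
        gcongr
        intro x
        simp only [mem_union, mem_filter, Set.mem_sdiff]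
        tauto
    _ ≤ #{x ∈ range n | x ∈ I \ T} + #{x ∈ range n | x ∈ T} := by
        exact_mod_cast card_union_le _ _

lemma sum_pdens_le_one {ι : Type*} {S : ι → Set ℕ} {T : Finset ι}
    (hS : (T : Set ι).PairwiseDisjoint S) (n : ℕ) : ∑ j ∈ T, pdens (S j) n ≤ 1 := by
  classical
  simp only [pdens_eq_card_filter, ← sum_div]
  apply div_le_one_of_le₀ _ n.cast_nonneg
  have hdisj : (T : Set ι).PairwiseDisjoint fun j ↦ {x ∈ range n | x ∈ S j} :=
    fun i hi j hj hij ↦ disjoint_filter_filter' _ _ (hS hi hj hij)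
  have hsub : T.biUnion (fun j ↦ {x ∈ range n | x ∈ S j}) ⊆ range n :=
    biUnion_subset.2 fun _ _ ↦ filter_subset _ _
  exact_mod_cast (card_biUnion hdisj).symm.trans_le ((card_le_card hsub).trans_eq (card_range n))

lemma card_mul_sub_le_one_of_lt_pdens {ι : Type*} {S : ι → Set ℕ} {T : Finset ι}
    (hS : (T : Set ι).PairwiseDisjoint S) {I : Set ℕ} {a b : ℝ} {n : ℕ} (ha : a < pdens I n)
    (hb : ∀ j ∈ T, pdens (I \ S j) n < b) : #T * (a - b) ≤ 1 := by
  have hlow : ∀ j ∈ T, a - b ≤ pdens (S j) n := fun j hj ↦ by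
    linarith [pdens_le_pdens_sdiff_add I (S j) n, hb j hj]
  calc (#T : ℝ) * (a - b) = #T • (a - b) := (nsmul_eq_mul _ _).symm
    _ ≤ ∑ j ∈ T, pdens (S j) n := card_nsmul_le_sum _ _ _ hlow
    _ ≤ 1 := sum_pdens_le_one hS n

lemma card_mul_sub_le_one_of_upperDensity_sdiff_le {ι : Type*} {S : ι → Set ℕ} {T : Finset ι}
    (hS : (T : Set ι).PairwiseDisjoint S) {I : Set ℕ} {q₀ a b : ℝ}
    (hT : ∀ j ∈ T, upperDensity (I \ S j) ≤ q₀) (ha : a < upperDensity I) (hb : q₀ < b) :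
    #T * (a - b) ≤ 1 := by
  have hsdiff : ∀ᶠ n in atTop, ∀ j ∈ T, pdens (I \ S j) n < b :=
    (eventually_all_finset T).2 fun j hj ↦ eventually_lt_of_limsup_lt ((hT j hj).trans_lt hb)
      (isBoundedUnder_of ⟨1, pdens_le_one _⟩)
  have hI : ∃ᶠ n in atTop, a < pdens I n :=
    frequently_lt_of_lt_limsup (isBoundedUnder_of ⟨0, pdens_nonneg I⟩).isCoboundedUnder_le ha
  obtain ⟨n, hIn, hsdiffn⟩ := (hI.and_eventually hsdiff).exists
  exact card_mul_sub_le_one_of_lt_pdens hS hIn hsdiffn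

lemma finite_setOf_upperDensity_sdiff_le {ι : Type*} {S : ι → Set ℕ}
    (hS : Pairwise (Disjoint on S)) {I : Set ℕ} {q₀ : ℝ} (h : q₀ < upperDensity I) :
    {j | upperDensity (I \ S j) ≤ q₀}.Finite := by
  obtain ⟨c, hc, hcI⟩ : ∃ c, 0 < c ∧ q₀ + 2 * c < upperDensity I :=
    ⟨(upperDensity I - q₀) / 3, by linarith, by linarith⟩
  by_contra hinf
  obtain ⟨k, hk⟩ := exists_nat_gt c⁻¹
  obtain ⟨T, hTB, rfl⟩ := Set.Infinite.exists_subset_card_eq hinf k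
  have hbound : #T * c ≤ 1 := by
    convert card_mul_sub_le_one_of_upperDensity_sdiff_le (hS.set_pairwise _) hTB
      hcI (lt_add_of_pos_right q₀ hc) using 2
    ring
  rw [inv_lt_iff_one_lt_mul₀ hc] at hk
  linarith

theorem stmt7 (S : ℕ → Set ℕ) (hS : ∀ i j : ℕ, i ≠ j → Disjoint (S i) (S j))
    (I : Set ℕ) (q₀ : ℝ) (h : q₀ < upperDensity I) :
    ∀ᶠ j in atTop, q₀ < upperDensity (I \ S j) := by
  rw [← Nat.cofinite_eq_atTop]
  filter_upwards [(finite_setOf_upperDensity_sdiff_le hS h).eventually_cofinite_notMem]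
    with j hj
  exact not_le.1 hj
end

section
/- Let F ⊆ ℕ be a finite set, let a, d ∈ ℕ, and let r be a rational number with 0 < r < 1. Then there exists a finite set G ⊇ F and a natural number c such that: G ∩ [0,a) = F ∩ [0,a); c > d; |G ∩ [0,c)|/c = r; and G ∩ [a,∞) is an initial segment of [a,∞) (i.e., G ∩ [a,∞) = [a,b) for some b ≥ a). -/
/-! Take `G = (F ∩ [0, a)) ∪ [a, b)`. Writing `r = n / q` in lowest terms, choose `c = q t` and
`b` so that `G` has `n t` elements, all below `c`; for `t` large, `b` exceeds `max F`, `c` exceeds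
`d`, and `c - n t = (q - n) t ≥ t` leaves room for `b ≤ c`. -/

open Filter

open Finset

theorem exists_nat_div_eq_of_pos_of_lt_one (r : ℚ) (h0 : 0 < r) (h1 : r < 1) (L : ℕ) :
    ∃ m c : ℕ, L ≤ m ∧ m + L ≤ c ∧ (m : ℚ) / c = r := by
  obtain ⟨n, hn⟩ := Int.eq_ofNat_of_zero_le (Rat.num_nonneg.2 h0.le)
  have hr : r = n / r.den := by simpa [hn] using (Rat.num_div_den r).symm
  have hn0 : 0 < n := by have := Rat.num_pos.2 h0; omega
  have hnd : n < r.den := by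
    rw [hr, div_lt_one (by positivity : (0 : ℚ) < r.den)] at h1
    exact_mod_cast h1
  refine ⟨n * (L + 1), r.den * (L + 1), by nlinarith, by nlinarith, ?_⟩
  push_cast
  rw [mul_div_mul_right _ _ (by positivity : ((L : ℚ) + 1) ≠ 0), ← hr]

def extendByIco (F : Finset ℕ) (a b : ℕ) : Finset ℕ :=
  F.filter (· < a) ∪ Ico a b

section

variable {F : Finset ℕ} {a b x : ℕ}

theorem mem_extendByIco : x ∈ extendByIco F a b ↔ x ∈ F ∧ x < a ∨ a ≤ x ∧ x < b := by
  simp only [extendByIco, mem_union, mem_filter, mem_Ico]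

theorem subset_extendByIco (hFb : ∀ x ∈ F, x < b) : F ⊆ extendByIco F a b := fun x hx => by
  rw [mem_extendByIco]
  by_cases hxa : x < a
  · exact .inl ⟨hx, hxa⟩
  · exact .inr ⟨not_lt.1 hxa, hFb x hx⟩

theorem filter_lt_extendByIco {c : ℕ} (hac : a ≤ c) (hbc : b ≤ c) :
    (extendByIco F a b).filter (· < c) = extendByIco F a b :=
  filter_true_of_mem fun x hx => by rw [mem_extendByIco] at hx; omega

theorem card_extendByIco : (extendByIco F a b).card = (F.filter (· < a)).card + (b - a) := by
  rw [extendByIco, card_union_of_disjoint, Nat.card_Ico]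
  exact disjoint_left.2 fun x hx hx' => by rw [mem_filter] at hx; rw [mem_Ico] at hx'; omega

end

theorem stmt8 (F : Finset ℕ) (a d : ℕ) (r : ℚ) (h0 : 0 < r) (h1 : r < 1) :
    ∃ (G : Finset ℕ) (c b : ℕ), F ⊆ G ∧ (∀ x, x < a → (x ∈ G ↔ x ∈ F)) ∧ d < c ∧
      ((G.filter (fun x => x < c)).card : ℚ) / c = r ∧
      a ≤ b ∧ (∀ x, a ≤ x → (x ∈ G ↔ x < b)) := by
  obtain ⟨M, hFM⟩ := F.exists_nat_subset_range
  set k := (F.filter (· < a)).card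
  obtain ⟨m, c, hm, hmc, hr⟩ := exists_nat_div_eq_of_pos_of_lt_one r h0 h1 (a + d + k + M + 1)
  set b := a + (m - k)
  refine ⟨extendByIco F a b, c, b, subset_extendByIco fun x hx => ?_, fun x hx => ?_, by omega,
    ?_, by omega, fun x hx => ?_⟩
  · have := mem_range.1 (hFM hx); omega
  · simp only [mem_extendByIco, hx, and_true, not_le.2 hx, false_and, or_false]
  · rw [filter_lt_extendByIco (by omega) (by omega), card_extendByIco, ← hr]
    congr; omega
  · rw [mem_extendByIco]; omega
end

section
/- Let D ⊆ ℕ be a nonempty finite set, and let T = {n ∈ ℕ : D_n ∩ D = ∅}, where D_n denotes the finite set with binary canonical index n (i.e., k ∈ D_n iff the k-th binary digit of n is 1). Then T has asymptotic density 2^{-|D|}. -/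
open Filter

/-!
Whether `n` has no binary digit in `D` depends only on `n mod 2 ^ m` once `D ⊆ [0, m)`, so the
set is periodic with period `2 ^ m`, and a periodic set has density equal to its relative
frequency within one period. Below `2 ^ m` the numbers correspond, via their bit sets, to subsets
of `[0, m)`; those avoiding `D` are the subsets of `[0, m) \ D`, so there are `2 ^ (m - |D|)`.
-/

open Finset Function Nat Topology

namespace Function.Periodic

variable {p : ℕ → Prop} [DecidablePred p] {a : ℕ}

theorem nat_count_mul_add (hp : Periodic p a) (q r : ℕ) :
    count p (a * q + r) = q * count p a + count p r := by
  induction q with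
  | zero => simp
  | succ q ih =>
    have hshift : (fun k => p (a + k)) = p := funext fun k => by rw [add_comm, hp k]
    rw [mul_add_one, add_comm (a * q), add_assoc, count_add]
    simp only [hshift, ih]
    ring

theorem tendsto_nat_count_div (hp : Periodic p a) (ha : 0 < a) :
    Tendsto (fun n => (count p n : ℝ) / n) atTop (𝓝 (count p a / a)) := by
  set t : ℝ := count p a / a
  have hbound : ∀ n, |(count p n : ℝ) - n * t| ≤ a := by
    intro n
    have hcount := hp.nat_count_mul_add (n / a) (n % a)
    rw [Nat.div_add_mod] at hcount
    have hn : (n : ℝ) = a * (n / a : ℕ) + (n % a : ℕ) := by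
      exact_mod_cast (Nat.div_add_mod n a).symm
    have hs : (count p (n % a) : ℝ) ≤ (n % a : ℕ) := by exact_mod_cast count_le p
    have hr : ((n % a : ℕ) : ℝ) ≤ a := by exact_mod_cast (Nat.mod_lt n ha).le
    have hat : (a : ℝ) * t = count p a := mul_div_cancel₀ _ (by positivity)
    have ht0 : 0 ≤ t := by positivity
    have ht1 : t ≤ 1 := div_le_one_of_le₀ (by exact_mod_cast count_le p) (by positivity)
    rw [hcount, hn, abs_le]
    push_cast
    constructor <;> nlinarith [mul_le_mul_of_nonneg_left ht1 (Nat.cast_nonneg (α := ℝ) (n % a)),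
      mul_nonneg ht0 (Nat.cast_nonneg (α := ℝ) (n % a))]
  rw [tendsto_iff_norm_sub_tendsto_zero]
  refine squeeze_zero' (Eventually.of_forall fun n => norm_nonneg _) ?_
    (tendsto_const_div_atTop_nhds_zero_nat (a : ℝ))
  filter_upwards [eventually_gt_atTop 0] with n hn
  have hn : (0 : ℝ) < n := by exact_mod_cast hn
  rw [Real.norm_eq_abs, ← mul_div_cancel_left₀ t hn.ne', ← sub_div, abs_div, abs_of_pos hn]
  exact div_le_div_of_nonneg_right (hbound n) hn.le

end Function.Periodic

theorem pdens_setOf (p : ℕ → Prop) [DecidablePred p] (n : ℕ) :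
    pdens {k | p k} n = count p n / n := by
  rw [pdens, count_eq_card_filter_range, ← Set.ncard_coe_finset]
  congr 3
  ext k
  simp [and_comm]

namespace Nat

theorem periodic_forall_testBit_eq_false {D : Finset ℕ} {m : ℕ} (hD : D ⊆ range m) :
    Periodic (fun n => ∀ k ∈ D, n.testBit k = false) (2 ^ m) := by
  intro n
  have hbit : ∀ k ∈ D, (n + 2 ^ m).testBit k = n.testBit k := fun k hk => by
    have hkm : k < m := mem_range.mp (hD hk)
    rw [← Bool.true_and ((n + 2 ^ m).testBit k), ← Bool.true_and (n.testBit k),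
      ← decide_eq_true hkm, ← testBit_mod_two_pow, ← testBit_mod_two_pow, add_mod_right]
  simp +contextual only [hbit]

theorem lt_two_pow_iff_toFinset_bitIndices_subset {n m : ℕ} :
    n < 2 ^ m ↔ n.bitIndices.toFinset ⊆ range m := by
  simp only [subset_iff, List.mem_toFinset, mem_bitIndices, mem_range]
  refine ⟨fun hn i hi => lt_of_not_ge fun hmi => ?_,
    fun h => lt_pow_two_of_testBit n fun i hi => ?_⟩
  · exact (hn.trans_le (Nat.pow_le_pow_right two_pos hmi)).not_ge (ge_two_pow_of_testBit hi)
  · exact Bool.eq_false_iff.mpr fun hb => (h hb).not_ge hi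

theorem count_forall_testBit_eq_false_two_pow {D : Finset ℕ} {m : ℕ} (hD : D ⊆ range m) :
    count (fun n => ∀ k ∈ D, n.testBit k = false) (2 ^ m) = 2 ^ (m - #D) := by
  have hset : {n ∈ range (2 ^ m) | ∀ k ∈ D, n.testBit k = false} =
      (range m \ D).powerset.map equivBitIndices.symm.toEmbedding := by
    ext n
    simp only [mem_filter, mem_range, mem_map_equiv, Equiv.symm_symm, equivBitIndices_apply,
      mem_powerset, subset_sdiff, lt_two_pow_iff_toFinset_bitIndices_subset, disjoint_right,
      List.mem_toFinset, mem_bitIndices, Bool.not_eq_true]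
  rw [count_eq_card_filter_range, hset, card_map, card_powerset, card_sdiff_of_subset hD,
    card_range]

end Nat

theorem stmt10_general (D : Finset ℕ) :
    Tendsto (pdens {n : ℕ | ∀ k ∈ D, n.testBit k = false}) atTop
      (nhds ((1 : ℝ) / 2 ^ D.card)) := by
  obtain ⟨m, hDm⟩ := D.exists_nat_subset_range
  have hcard : #D ≤ m := by simpa using card_le_card hDm
  have hlim : (1 : ℝ) / 2 ^ #D = (2 ^ (m - #D) : ℕ) / (2 ^ m : ℕ) := by
    push_cast
    rw [pow_sub₀ _ two_ne_zero hcard]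
    field_simp
  simp_rw [funext (pdens_setOf _), hlim, ← count_forall_testBit_eq_false_two_pow hDm]
  exact (periodic_forall_testBit_eq_false hDm).tendsto_nat_count_div (by positivity)

theorem stmt10 (D : Finset ℕ) (hD : D.Nonempty) :
    Tendsto (pdens {n : ℕ | ∀ k ∈ D, n.testBit k = false}) atTop
      (nhds ((1 : ℝ) / 2 ^ D.card)) :=
  stmt10_general D
end
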